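/- For every natural number k with k ≥ 12, we have −k²/16 ≤ g(k) ≤ −(k−8)²/72, where g(k) = min{ γ'_s(G) : G is a graph on k vertices }. -/

import Mathlib

open scoped Classical

noncomputable def edgeFin {V : Type*} [Fintype V] (G : SimpleGraph V) : Finset (Sym2 V) :=
  Finset.univ.filter (· ∈ G.edgeSet)

noncomputable def closedNbhd {V : Type*} [Fintype V] (G : SimpleGraph V) (e : Sym2 V) :
    Finset (Sym2 V) :=
  (edgeFin G).filter (fun e' => ∃ v, v ∈ e ∧ v ∈ e')

def IsSEDF {V : Type*} [Fintype V] (G : SimpleGraph V) (f : Sym2 V → ℤ) : Prop :=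
  (∀ e ∈ edgeFin G, f e = 1 ∨ f e = -1) ∧
  ∀ e ∈ edgeFin G, 1 ≤ ∑ e' ∈ closedNbhd G e, f e'

noncomputable def vsum {V : Type*} [Fintype V] (G : SimpleGraph V) (f : Sym2 V → ℤ) (v : V) : ℤ :=
  ∑ e ∈ (edgeFin G).filter (fun e => v ∈ e), f e

noncomputable def gammaS {V : Type*} [Fintype V] (G : SimpleGraph V) : ℤ :=
  sInf {z : ℤ | ∃ f, IsSEDF G f ∧ z = ∑ e ∈ edgeFin G, f e}

def IsLGraph {V : Type*} [Fintype V] (m n : ℕ) (G : SimpleGraph V) : Prop :=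
  Fintype.card V = (n + 1) * (m * n + m + 1) ∧
  ∃ P : Fin (n + 1) → Finset V,
    (∀ v : V, ∃! i, v ∈ P i) ∧
    (∀ i, (P i).card = m * n + m + 1) ∧
    (∀ u ∈ P 0, ∀ v ∈ P 0, u ≠ v → G.Adj u v) ∧
    (∀ i, i ≠ 0 → ∀ u ∈ P i, ∀ v ∈ P i, ¬ G.Adj u v) ∧
    (∀ i, i ≠ 0 → ∀ v ∈ P i, ((P 0).filter (G.Adj v)).card = m) ∧
    (∀ i, i ≠ 0 → ∀ v ∈ P 0, ((P i).filter (G.Adj v)).card = m) ∧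
    (∀ i j, i ≠ 0 → j ≠ 0 → i ≠ j → ∀ u ∈ P i, ∀ v ∈ P j, ¬ G.Adj u v)

def MConnected {V : Type*} [Fintype V] (m : ℕ) (G : SimpleGraph V) : Prop :=
  m < Fintype.card V ∧
  ∀ S : Finset V, S.card < m → (G.induce ((↑S : Set V)ᶜ)).Connected

def IsElementary {V : Type*} (H : SimpleGraph V) : Prop :=
  (∀ v, (H.neighborSet v).ncard ≤ 2) ∧
  ∀ v, (H.neighborSet v).ncard = 1 → ∀ w, H.Adj v w → (H.neighborSet w).ncard = 1

noncomputable def g (k : ℕ) : ℤ :=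
  sInf {z : ℤ | ∃ G : SimpleGraph (Fin k), z = gammaS G}


/-!
Write `d v` (`vsum`) for the sum of `f` over the edges at `v`. The closed-neighbourhood sum of
an edge `uv` is `d u + d v - f(uv)`, and `2 ∑ f = ∑ d`.

Lower bound: let `v₀` minimise `d` and put `a = |d v₀|`. Domination at the edges `v₀u` gives
`d u + d v₀ ≥ 0`, so the `s = deg v₀ ≥ a` neighbours of `v₀` have `d ≥ a`, while every vertex has
`d ≥ -a`. Hence `∑ d ≥ a (2s - k) ≥ -k² / 8`.

Upper bound: take `m = ⌊(k - 3) / 9⌋`, a clique `K_{3m+1}` and two independent copies of its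
vertex set, each outer vertex joined to `m` cyclically consecutive clique vertices, and leave the
remaining vertices isolated. Weight `+1` on clique edges and `-1` elsewhere gives `d = m` on the
clique and `d = -m` outside, so every closed-neighbourhood sum is at least `1` and the total
weight is `-(3m + 1) m / 2`.
-/

section VertexSums

variable {V : Type*} [Fintype V] {G : SimpleGraph V} {f : Sym2 V → ℤ}

lemma mem_edgeFin {e : Sym2 V} : e ∈ edgeFin G ↔ e ∈ G.edgeSet := by
  simp [edgeFin]

lemma mk_mem_edgeFin {u v : V} : s(u, v) ∈ edgeFin G ↔ G.Adj u v := mem_edgeFin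

lemma vsum_eq_sum_neighborFinset (v : V) :
    vsum G f v = ∑ u ∈ G.neighborFinset v, f s(v, u) := by
  have himage : (edgeFin G).filter (v ∈ ·) = (G.neighborFinset v).image (s(v, ·)) := by
    ext e
    simp only [Finset.mem_filter, Finset.mem_image, mem_edgeFin, SimpleGraph.mem_neighborFinset]
    constructor
    · rintro ⟨he, hv⟩
      obtain ⟨u, rfl⟩ := Sym2.mem_iff_exists.mp hv
      exact ⟨u, he, rfl⟩
    · rintro ⟨u, hu, rfl⟩
      exact ⟨hu, Sym2.mem_mk_left v u⟩
  rw [vsum, himage, Finset.sum_image fun _ _ _ _ => Sym2.congr_right.mp]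

lemma vsum_eq_sum_ite (v : V) :
    vsum G f v = ∑ u, if G.Adj v u then f s(v, u) else 0 := by
  rw [vsum_eq_sum_neighborFinset, ← Finset.sum_filter]
  exact Finset.sum_congr (by ext; simp) fun _ _ => rfl

lemma two_mul_sum_edgeFin : 2 * ∑ e ∈ edgeFin G, f e = ∑ v, vsum G f v := by
  unfold vsum
  rw [Finset.sum_comm' (t' := edgeFin G) (s' := fun e => Finset.univ.filter (· ∈ e))
    (fun v e => by simp only [Finset.mem_filter, Finset.mem_univ, true_and]; tauto),
    Finset.mul_sum]
  refine Finset.sum_congr rfl fun e he => ?_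
  induction e with
  | _ a b =>
    have hab : a ≠ b := G.ne_of_adj (mem_edgeFin.mp he)
    have : Finset.univ.filter (· ∈ s(a, b)) = {a, b} := by ext; simp
    rw [Finset.sum_const, this, Finset.card_pair hab, nsmul_eq_mul]
    push_cast; ring

lemma sum_closedNbhd_mk {u v : V} (huv : G.Adj u v) :
    ∑ e ∈ closedNbhd G s(u, v), f e = vsum G f u + vsum G f v - f s(u, v) := by
  have hunion : closedNbhd G s(u, v) =
      (edgeFin G).filter (u ∈ ·) ∪ (edgeFin G).filter (v ∈ ·) := by
    ext e; simp [closedNbhd, ← Finset.filter_or]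
  have hinter : (edgeFin G).filter (u ∈ ·) ∩ (edgeFin G).filter (v ∈ ·) = {s(u, v)} := by
    ext e
    simp only [← Finset.filter_and, Finset.mem_filter, Finset.mem_singleton, mem_edgeFin]
    refine ⟨fun ⟨_, hu, hv⟩ => (Sym2.mem_and_mem_iff huv.ne).mp ⟨hu, hv⟩, ?_⟩
    rintro rfl
    exact ⟨huv, Sym2.mem_mk_left u v, Sym2.mem_mk_right u v⟩
  have := Finset.sum_union_inter (s₁ := (edgeFin G).filter (u ∈ ·))
    (s₂ := (edgeFin G).filter (v ∈ ·)) (f := f)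
  rw [hinter, Finset.sum_singleton] at this
  rw [hunion, vsum, vsum]
  linarith

end VertexSums

section LowerBound

variable {V : Type*} [Fintype V] {G : SimpleGraph V} {f : Sym2 V → ℤ}

lemma isSEDF_iff : IsSEDF G f ↔ (∀ e ∈ edgeFin G, f e = 1 ∨ f e = -1) ∧
    ∀ u v, G.Adj u v → 1 ≤ vsum G f u + vsum G f v - f s(u, v) := by
  refine and_congr_right fun _ => ⟨fun h u v huv => ?_, fun h e he => ?_⟩
  · rw [← sum_closedNbhd_mk huv]
    exact h _ (mem_edgeFin.mpr huv)
  · induction e with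
    | _ u v =>
      have huv : G.Adj u v := mem_edgeFin.mp he
      rw [sum_closedNbhd_mk huv]
      exact h u v huv

lemma abs_vsum_le_degree (hf : ∀ e ∈ edgeFin G, f e = 1 ∨ f e = -1) (v : V) :
    |vsum G f v| ≤ G.degree v := by
  rw [vsum_eq_sum_neighborFinset, ← SimpleGraph.card_neighborFinset_eq_degree]
  calc |∑ u ∈ G.neighborFinset v, f s(v, u)|
      ≤ ∑ u ∈ G.neighborFinset v, |f s(v, u)| := Finset.abs_sum_le_sum_abs _ _
    _ = ∑ u ∈ G.neighborFinset v, 1 := Finset.sum_congr rfl fun u hu => by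
        rcases hf _ (mk_mem_edgeFin.mpr ((G.mem_neighborFinset v u).mp hu)) with h | h <;> simp [h]
    _ = _ := by simp

lemma IsSEDF.vsum_add_vsum_nonneg (hf : IsSEDF G f) {u v : V} (huv : G.Adj u v) :
    0 ≤ vsum G f u + vsum G f v := by
  have h := (isSEDF_iff.mp hf).2 u v huv
  rcases hf.1 _ (mk_mem_edgeFin.mpr huv) with h' | h' <;> omega

lemma neg_sq_card_le_eight_mul_sum {ι : Type*} [Fintype ι] (d : ι → ℤ) (s : Finset ι) {a : ℤ}
    (ha : 0 ≤ a) (has : a ≤ s.card) (hs : ∀ i ∈ s, a ≤ d i) (hd : ∀ i, -a ≤ d i) :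
    -(Fintype.card ι : ℤ) ^ 2 ≤ 8 * ∑ i, d i := by
  have hsum_s : a * s.card ≤ ∑ i ∈ s, d i := by
    simpa [mul_comm] using Finset.card_nsmul_le_sum s d a hs
  have hsum_compl : -a * sᶜ.card ≤ ∑ i ∈ sᶜ, d i := by
    simpa [mul_comm] using Finset.card_nsmul_le_sum sᶜ d (-a) fun i _ => hd i
  have hcard : (sᶜ.card : ℤ) = Fintype.card ι - s.card := by
    rw [Finset.card_compl, Nat.cast_sub (Finset.card_le_univ s)]
  have hs_le : (s.card : ℤ) ≤ Fintype.card ι := by exact_mod_cast Finset.card_le_univ s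
  rw [← Finset.sum_add_sum_compl s]
  rcases le_total (2 * (s.card : ℤ)) (Fintype.card ι) with hsmall | hlarge
  · -- here `a (2|s| - n) ≥ |s| (2|s| - n) ≥ -n² / 8`
    nlinarith [sq_nonneg (4 * (s.card : ℤ) - Fintype.card ι),
      mul_nonneg (sub_nonneg.mpr has) (sub_nonneg.mpr hsmall)]
  · nlinarith [mul_nonneg ha (sub_nonneg.mpr hlarge)]

theorem IsSEDF.neg_sq_card_le_sixteen_mul_sum (hf : IsSEDF G f) :
    -(Fintype.card V : ℤ) ^ 2 ≤ 16 * ∑ e ∈ edgeFin G, f e := by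
  rw [show (16 : ℤ) = 8 * 2 by norm_num, mul_assoc, two_mul_sum_edgeFin]
  cases isEmpty_or_nonempty V
  · simp
  obtain ⟨v₀, hv₀⟩ := Finite.exists_min (vsum G f)
  refine neg_sq_card_le_eight_mul_sum _ (G.neighborFinset v₀) (abs_nonneg (vsum G f v₀)) ?_ ?_ ?_
  · rw [SimpleGraph.card_neighborFinset_eq_degree]
    exact abs_vsum_le_degree hf.1 v₀
  · intro u hu
    have := hf.vsum_add_vsum_nonneg ((G.mem_neighborFinset v₀ u).mp hu)
    exact abs_le'.mpr ⟨hv₀ u, by linarith⟩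
  · intro v
    linarith [neg_abs_le (vsum G f v₀), hv₀ v]

end LowerBound

lemma bddBelow_of_neg_sq_le_sixteen_mul {S : Set ℤ} (n : ℤ) (h : ∀ z ∈ S, -n ^ 2 ≤ 16 * z) :
    BddBelow S :=
  ⟨-n ^ 2, fun z hz => by nlinarith [h z hz, sq_nonneg n]⟩

section SignedEdgeDomination

variable {V : Type*} [Fintype V] {G : SimpleGraph V} {f : Sym2 V → ℤ}

lemma isSEDF_one : IsSEDF G fun _ => 1 := by
  refine ⟨fun _ _ => Or.inl rfl, fun e he => ?_⟩
  have hmem : e ∈ closedNbhd G e := by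
    refine Finset.mem_filter.mpr ⟨he, ?_⟩
    induction e with
    | _ a b => exact ⟨a, Sym2.mem_mk_left a b, Sym2.mem_mk_left a b⟩
  simpa using Finset.card_pos.mpr ⟨e, hmem⟩

lemma bddBelow_sedf_weights (G : SimpleGraph V) :
    BddBelow {z : ℤ | ∃ f, IsSEDF G f ∧ z = ∑ e ∈ edgeFin G, f e} :=
  bddBelow_of_neg_sq_le_sixteen_mul (Fintype.card V) <| by
    rintro _ ⟨f, hf, rfl⟩
    exact hf.neg_sq_card_le_sixteen_mul_sum

lemma gammaS_le (hf : IsSEDF G f) : gammaS G ≤ ∑ e ∈ edgeFin G, f e :=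
  csInf_le (bddBelow_sedf_weights G) ⟨f, hf, rfl⟩

lemma exists_isSEDF_gammaS_eq (G : SimpleGraph V) :
    ∃ f, IsSEDF G f ∧ gammaS G = ∑ e ∈ edgeFin G, f e :=
  Int.csInf_mem (s := {z : ℤ | ∃ f, IsSEDF G f ∧ z = ∑ e ∈ edgeFin G, f e})
    ⟨_, fun _ => 1, isSEDF_one, rfl⟩ (bddBelow_sedf_weights G)

lemma neg_sq_card_le_sixteen_mul_gammaS (G : SimpleGraph V) :
    -(Fintype.card V : ℤ) ^ 2 ≤ 16 * gammaS G := by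
  obtain ⟨f, hf, hG⟩ := exists_isSEDF_gammaS_eq G
  exact hG ▸ hf.neg_sq_card_le_sixteen_mul_sum

end SignedEdgeDomination

lemma sum_image_map_extend {V W : Type*} {f : Sym2 V → ℤ} (φ : V ↪ W) (s : Finset (Sym2 V)) :
    ∑ e ∈ s.image (Sym2.map φ), Function.extend (Sym2.map φ) f 0 e = ∑ e ∈ s, f e := by
  have hinj : Function.Injective (Sym2.map φ) := Sym2.map.injective φ.injective
  rw [Finset.sum_image fun _ _ _ _ h => hinj h]
  exact Finset.sum_congr rfl fun e _ => hinj.extend_apply f 0 e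

section Map

variable {V W : Type*} [Fintype V] [Fintype W] {G : SimpleGraph V} {f : Sym2 V → ℤ} (φ : V ↪ W)

lemma edgeFin_map : edgeFin (G.map φ) = (edgeFin G).image (Sym2.map φ) := by
  ext e
  simp [mem_edgeFin, SimpleGraph.edgeSet_map]

lemma closedNbhd_map (e : Sym2 V) :
    closedNbhd (G.map φ) (Sym2.map φ e) = (closedNbhd G e).image (Sym2.map φ) := by
  rw [closedNbhd, closedNbhd, edgeFin_map, Finset.filter_image]
  refine congrArg _ (Finset.filter_congr fun e' _ => ?_)
  simp only [Sym2.mem_map]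
  constructor
  · rintro ⟨_, ⟨a, ha, rfl⟩, ⟨b, hb, hab⟩⟩
    exact ⟨a, ha, φ.injective hab ▸ hb⟩
  · rintro ⟨a, ha, ha'⟩
    exact ⟨φ a, ⟨a, ha, rfl⟩, ⟨a, ha', rfl⟩⟩

lemma IsSEDF.map (hf : IsSEDF G f) : IsSEDF (G.map φ) (Function.extend (Sym2.map φ) f 0) := by
  have hinj : Function.Injective (Sym2.map φ) := Sym2.map.injective φ.injective
  constructor
  · intro e he
    obtain ⟨e, he', rfl⟩ := Finset.mem_image.mp (edgeFin_map φ ▸ he)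
    rw [hinj.extend_apply]
    exact hf.1 e he'
  · intro e he
    obtain ⟨e, he', rfl⟩ := Finset.mem_image.mp (edgeFin_map φ ▸ he)
    rw [closedNbhd_map, sum_image_map_extend]
    exact hf.2 e he'

lemma gammaS_map_le (G : SimpleGraph V) : gammaS (G.map φ) ≤ gammaS G := by
  obtain ⟨f, hf, hG⟩ := exists_isSEDF_gammaS_eq G
  calc gammaS (G.map φ) ≤ ∑ e ∈ edgeFin (G.map φ), Function.extend (Sym2.map φ) f 0 e :=
        gammaS_le (hf.map φ)
    _ = gammaS G := by rw [edgeFin_map, sum_image_map_extend, hG]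

end Map

lemma bddBelow_gammaS_range (k : ℕ) :
    BddBelow {z : ℤ | ∃ G : SimpleGraph (Fin k), z = gammaS G} :=
  bddBelow_of_neg_sq_le_sixteen_mul k fun _ ⟨G, hz⟩ => by
    simpa [hz] using neg_sq_card_le_sixteen_mul_gammaS G

lemma neg_sq_le_sixteen_mul_g (k : ℕ) : -(k : ℤ) ^ 2 ≤ 16 * g k := by
  obtain ⟨G, hG⟩ : g k ∈ {z : ℤ | ∃ G : SimpleGraph (Fin k), z = gammaS G} :=
    Int.csInf_mem ⟨_, ⊥, rfl⟩ (bddBelow_gammaS_range k)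
  simpa [hG] using neg_sq_card_le_sixteen_mul_gammaS G

lemma g_le_gammaS {k : ℕ} {V : Type*} [Fintype V] (hV : Fintype.card V ≤ k) (G : SimpleGraph V) :
    g k ≤ gammaS G := by
  obtain ⟨φ⟩ := Function.Embedding.nonempty_of_card_le (hV.trans (Fintype.card_fin k).ge)
  exact (csInf_le (bddBelow_gammaS_range k) ⟨G.map φ, rfl⟩).trans (gammaS_map_le φ G)

lemma card_filter_val_lt (n a : ℕ) (ha : a ≤ n + 1) :
    (Finset.univ.filter fun z : ZMod (n + 1) => z.val < a).card = a :=
  (Fin.card_filter_val_lt (n := n + 1) (m := a)).trans (min_eq_right ha)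

lemma card_filter_val_sub_lt_left (n a : ℕ) (ha : a ≤ n + 1) (x : ZMod (n + 1)) :
    (Finset.univ.filter fun y : ZMod (n + 1) => (x - y).val < a).card = a :=
  (Finset.card_equiv (Equiv.subLeft x) (by simp)).trans (card_filter_val_lt n a ha)

lemma card_filter_val_sub_lt_right (n a : ℕ) (ha : a ≤ n + 1) (y : ZMod (n + 1)) :
    (Finset.univ.filter fun x : ZMod (n + 1) => (x - y).val < a).card = a :=
  (Finset.card_equiv (Equiv.subRight y) (by simp)).trans (card_filter_val_lt n a ha)

section Construction

variable (m : ℕ)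

/-- `none` labels the clique `K_{3m+1}`; each of the two layers `some j` is an independent copy
of `ZMod (3m+1)` whose vertex `y` is joined to the clique vertices `y, y + 1, …, y + m - 1`. -/
def bandAdj : Option (Fin 2) × ZMod (3 * m + 1) → Option (Fin 2) × ZMod (3 * m + 1) → Prop
  | (none, x), (none, y) => x ≠ y
  | (none, x), (some _, y) => (x - y).val < m
  | (some _, y), (none, x) => (x - y).val < m
  | (some _, _), (some _, _) => False

def bandGraph : SimpleGraph (Option (Fin 2) × ZMod (3 * m + 1)) where
  Adj := bandAdj m
  symm := by
    constructor
    rintro ⟨_ | _, x⟩ ⟨_ | _, y⟩ h <;> simp only [bandAdj] at h ⊢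
    · exact h.symm
    all_goals exact h
  loopless := by
    constructor
    rintro ⟨_ | _, x⟩ h <;> simp [bandAdj] at h

def cliqueSign (e : Sym2 (Option (Fin 2) × ZMod (3 * m + 1))) : ℤ :=
  if ∀ v ∈ e, v.1 = none then 1 else -1

variable {m}

@[simp]
lemma bandGraph_adj_none_none {x y : ZMod (3 * m + 1)} :
    (bandGraph m).Adj (none, x) (none, y) ↔ x ≠ y := Iff.rfl

@[simp]
lemma bandGraph_adj_none_some {j : Fin 2} {x y : ZMod (3 * m + 1)} :
    (bandGraph m).Adj (none, x) (some j, y) ↔ (x - y).val < m := Iff.rfl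

@[simp]
lemma bandGraph_adj_some_none {j : Fin 2} {x y : ZMod (3 * m + 1)} :
    (bandGraph m).Adj (some j, y) (none, x) ↔ (x - y).val < m := Iff.rfl

@[simp]
lemma bandGraph_not_adj_some_some {i j : Fin 2} {x y : ZMod (3 * m + 1)} :
    ¬ (bandGraph m).Adj (some i, x) (some j, y) := id

@[simp]
lemma cliqueSign_mk (a b : Option (Fin 2) × ZMod (3 * m + 1)) :
    cliqueSign m s(a, b) = if a.1 = none ∧ b.1 = none then 1 else -1 := by
  simp only [cliqueSign, Sym2.forall_mem_pair]

lemma vsum_bandGraph_none (x : ZMod (3 * m + 1)) :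
    vsum (bandGraph m) (cliqueSign m) (none, x) = m := by
  rw [vsum_eq_sum_ite, Fintype.sum_prod_type, Fintype.sum_option]
  simp [Finset.sum_ite, Finset.filter_ne, card_filter_val_sub_lt_left (3 * m) m (by omega) x]
  ring

lemma vsum_bandGraph_some (j : Fin 2) (y : ZMod (3 * m + 1)) :
    vsum (bandGraph m) (cliqueSign m) (some j, y) = -m := by
  rw [vsum_eq_sum_ite, Fintype.sum_prod_type, Fintype.sum_option]
  simp [Finset.sum_ite, card_filter_val_sub_lt_right (3 * m) m (by omega) y]

lemma bandGraph_isSEDF (hm : 0 < m) : IsSEDF (bandGraph m) (cliqueSign m) := by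
  refine isSEDF_iff.mpr ⟨fun e _ => by unfold cliqueSign; split <;> simp, ?_⟩
  rintro ⟨_ | i, x⟩ ⟨_ | j, y⟩ huv
  · simp only [vsum_bandGraph_none, cliqueSign_mk, and_self, ↓reduceIte]
    omega
  · simp [vsum_bandGraph_none, vsum_bandGraph_some]
  · simp [vsum_bandGraph_none, vsum_bandGraph_some]
  · exact absurd huv bandGraph_not_adj_some_some

lemma two_mul_sum_cliqueSign :
    2 * ∑ e ∈ edgeFin (bandGraph m), cliqueSign m e = -((3 * m + 1) * m : ℤ) := by
  rw [two_mul_sum_edgeFin, Fintype.sum_prod_type, Fintype.sum_option]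
  simp [vsum_bandGraph_none, vsum_bandGraph_some]
  ring

end Construction

lemma two_mul_g_le {k m : ℕ} (hm : 0 < m) (hk : 9 * m + 3 ≤ k) :
    2 * g k ≤ -((3 * m + 1) * m : ℤ) := by
  have hcard : Fintype.card (Option (Fin 2) × ZMod (3 * m + 1)) ≤ k := by
    simp only [Fintype.card_prod, Fintype.card_option, Fintype.card_fin, ZMod.card]
    omega
  calc 2 * g k ≤ 2 * ∑ e ∈ edgeFin (bandGraph m), cliqueSign m e := by
        gcongr
        exact (g_le_gammaS hcard _).trans (gammaS_le (bandGraph_isSEDF hm))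
    _ = _ := two_mul_sum_cliqueSign

theorem stmt12 (k : ℕ) (hk : 12 ≤ k) :
    -((k : ℚ) ^ 2) / 16 ≤ (g k : ℚ) ∧ (g k : ℚ) ≤ -(((k : ℚ) - 8) ^ 2) / 72 := by
  constructor
  · have h : -((k : ℚ) ^ 2) ≤ 16 * g k := by exact_mod_cast neg_sq_le_sixteen_mul_g k
    rw [div_le_iff₀ (by norm_num)]
    linarith
  · set m := (k - 3) / 9
    have hm : 0 < m := by omega
    have hg : 2 * (g k : ℚ) ≤ -((3 * m + 1) * m) := by exact_mod_cast two_mul_g_le hm (by omega)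
    have hlo : (8 : ℚ) ≤ k := by exact_mod_cast (by omega : 8 ≤ k)
    have hhi : (k : ℚ) ≤ 9 * m + 11 := by exact_mod_cast (by omega : k ≤ 9 * m + 11)
    have hm1 : (1 : ℚ) ≤ m := by exact_mod_cast hm
    have hsq : ((k : ℚ) - 8) ^ 2 ≤ (9 * m + 3) ^ 2 :=
      pow_le_pow_left₀ (by linarith) (by linarith) 2
    rw [le_div_iff₀ (by norm_num)]
    -- `(9m + 3)² ≤ 36 (3m + 1) m` amounts to `(3m + 1)(m - 1) ≥ 0`
    nlinarith [mul_nonneg (by linarith : (0 : ℚ) ≤ 3 * m + 1) (sub_nonneg.mpr hm1)]
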